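/- Avoiding small sets (Lemma 4.2(5)): in the abstract creature framework, assume every creature with norm > 1 is (n,r)-decisive and (B,r)-big (B ≥ 1), δ ∈ ω, nor(𝔠) > 1 + (δ+1)·r, and X ⊆ val(𝔠) has |X| < EXP(B,n,δ). Then there is 𝔡 ∈ Σ(𝔠) with nor(𝔡) ≥ nor(𝔠) − (δ+1)·r and val(𝔡) ∩ X = ∅. -/
import Mathlib


/-- An abstract creature framework: each creature has a finite nonempty set of values,
a nonnegative real norm (singleton value set forces norm 0), and a reflexive transitive
successor relation along which values and norms decrease. -/
structure CreatureSystem (α : Type*) (V : Type*) where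
  val : α → Finset V
  nor : α → ℝ
  succ : α → α → Prop
  val_nonempty : ∀ c, (val c).Nonempty
  nor_nonneg : ∀ c, 0 ≤ nor c
  nor_of_singleton : ∀ c, (val c).card = 1 → nor c = 0
  succ_refl : ∀ c, succ c c
  succ_trans : ∀ c d e, succ c d → succ d e → succ c e
  val_subset : ∀ c d, succ c d → val d ⊆ val c
  nor_le : ∀ c d, succ c d → nor d ≤ nor c

variable {α V : Type*}

/-- `c` is (B,r)-big: every B-coloring of val(c) has a monochromatic successor losing
at most r in norm. -/
def CreatureSystem.Big (CS : CreatureSystem α V) (B : ℕ) (r : ℝ) (c : α) : Prop :=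
  ∀ F : V → Fin B, ∃ d, CS.succ c d ∧ CS.nor c - r ≤ CS.nor d ∧
    ∀ x ∈ CS.val d, ∀ y ∈ CS.val d, F x = F y

/-- `c` is hereditarily (B,r)-big: every successor with norm > 1 is (B,r)-big. -/
def CreatureSystem.HerBig (CS : CreatureSystem α V) (B : ℕ) (r : ℝ) (c : α) : Prop :=
  ∀ d, CS.succ c d → 1 < CS.nor d → CS.Big B r d

/-- `c` is (K,n,r)-decisive: it has a K-small successor and a K-big successor. -/
def CreatureSystem.DecisiveK (CS : CreatureSystem α V) (K n : ℕ) (r : ℝ) (c : α) : Prop :=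
  ∃ dm dp, CS.succ c dm ∧ CS.succ c dp ∧
    CS.nor c - r ≤ CS.nor dm ∧ CS.nor c - r ≤ CS.nor dp ∧
    (CS.val dm).card ≤ K ∧ CS.HerBig (2 ^ K ^ n) r dp

/-- `c` is (n,r)-decisive: it is (K,n,r)-decisive for some K. -/
def CreatureSystem.Decisive (CS : CreatureSystem α V) (n : ℕ) (r : ℝ) (c : α) : Prop :=
  ∃ K, CS.DecisiveK K n r c

/-- `c` is r-halving. -/
def CreatureSystem.Halving (CS : CreatureSystem α V) (r : ℝ) (c : α) : Prop :=
  ∃ h, CS.succ c h ∧ CS.nor c - r ≤ CS.nor h ∧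
    ∀ d, CS.succ h d → 0 < CS.nor d →
      ∃ d', CS.succ c d' ∧ CS.nor c - r ≤ CS.nor d' ∧ CS.val d' ⊆ CS.val d

def EXP (B n : ℕ) : ℕ → ℕ
  | 0 => B
  | m + 1 => 2 ^ (EXP B n m) ^ n

lemma EXP_pos {B n : ℕ} (hB : 1 ≤ B) : ∀ δ, 1 ≤ EXP B n δ
  | 0 => hB
  | m + 1 => Nat.one_le_two_pow

lemma big_mono {α V : Type*} (CS : CreatureSystem α V) {B B' : ℕ} {r : ℝ} {c : α}
    (h : B' ≤ B) (hb : CS.Big B r c) : CS.Big B' r c := by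
  intro F
  obtain ⟨d, h1, h2, h3⟩ := hb (fun x => Fin.castLE h (F x))
  exact ⟨d, h1, h2, fun x hx y hy => Fin.castLE_injective h (h3 x hx y hy)⟩

lemma big_of_small_val {α V : Type*} (CS : CreatureSystem α V) {B : ℕ} {r : ℝ} {c : α}
    (hB : 1 ≤ B) (hcard : (CS.val c).card ≤ B) (hb : CS.Big B r c) (B'' : ℕ) :
    CS.Big B'' r c := by
  intro F
  classical
  set S : Finset (Fin B'') := (CS.val c).image F with hS
  have hScard : S.card ≤ B := le_trans (Finset.card_image_le) hcard
  set g : Fin B'' → Fin B := fun j =>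
    if hj : j ∈ S then Fin.castLE hScard (S.equivFin ⟨j, hj⟩) else ⟨0, hB⟩ with hg
  obtain ⟨d, h1, h2, h3⟩ := hb (fun x => g (F x))
  refine ⟨d, h1, h2, fun x hx y hy => ?_⟩
  have hxc : F x ∈ S := Finset.mem_image_of_mem F (CS.val_subset c d h1 hx)
  have hyc : F y ∈ S := Finset.mem_image_of_mem F (CS.val_subset c d h1 hy)
  have := h3 x hx y hy
  simp only [hg, dif_pos hxc, dif_pos hyc] at this
  have := Fin.castLE_injective hScard this
  have := S.equivFin.injective this
  exact Subtype.ext_iff.mp this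

lemma herbig_exists {α V : Type*} (CS : CreatureSystem α V) (n B : ℕ) (r : ℝ)
    (hr : 0 < r) (hB : 1 ≤ B)
    (hdec : ∀ c, 1 < CS.nor c → CS.Decisive n r c)
    (hbig : ∀ c, 1 < CS.nor c → CS.Big B r c) :
    ∀ (δ : ℕ) (c : α), 1 + (δ : ℝ) * r < CS.nor c →
      ∃ d, CS.succ c d ∧ CS.nor c - (δ : ℝ) * r ≤ CS.nor d ∧
        CS.HerBig (EXP B n δ) r d := by
  intro δ
  induction δ with
  | zero =>
    intro c hc
    refine ⟨c, CS.succ_refl c, by simp, fun d hd hnd => hbig d hnd⟩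
  | succ δ ih =>
    intro c hc
    have hδr : 0 ≤ (δ : ℝ) * r := by positivity
    have hc1 : 1 < CS.nor c := by push_cast at hc; nlinarith
    obtain ⟨K, dm, dp, hm, hp, hnm, hnp, hcard, hher⟩ := hdec c hc1
    by_cases hK : EXP B n δ ≤ K
    · -- use the big part dp
      have hle : EXP B n (δ + 1) ≤ 2 ^ K ^ n := by
        simp only [EXP]
        exact Nat.pow_le_pow_right (by norm_num) (Nat.pow_le_pow_left hK n)
      refine ⟨dp, hp, ?_, fun d hd hnd => big_mono CS hle (hher d hd hnd)⟩
      push_cast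
      linarith
    · -- use the small part dm
      push_neg at hK
      have hmnor : 1 + (δ : ℝ) * r < CS.nor dm := by push_cast at hc; linarith
      obtain ⟨d, hd1, hd2, hd3⟩ := ih dm hmnor
      refine ⟨d, CS.succ_trans c dm d hm hd1, by push_cast; linarith, ?_⟩
      intro e he hne
      have hbe : CS.Big (EXP B n δ) r e := hd3 e he hne
      have hcarde : (CS.val e).card ≤ EXP B n δ := by
        have h1 : CS.val e ⊆ CS.val dm :=
          subset_trans (CS.val_subset d e he) (CS.val_subset dm d hd1)
        exact le_trans (le_trans (Finset.card_le_card h1) hcard) (le_of_lt hK)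
      exact big_of_small_val CS (EXP_pos hB δ) hcarde hbe (EXP B n (δ + 1))

/-- avoiding small sets: if |X| < EXP(B,n,δ) then some successor of 𝔠 avoids
X, losing at most (δ+1)·r in norm. -/
theorem stmt_16 {α V : Type*} (CS : CreatureSystem α V) (n B δ : ℕ) (r : ℝ)
    (hr : 0 < r) (hr1 : r ≤ 1) (hB : 1 ≤ B)
    (hdec : ∀ c, 1 < CS.nor c → CS.Decisive n r c)
    (hbig : ∀ c, 1 < CS.nor c → CS.Big B r c)
    (c : α) (hc : 1 + ((δ : ℝ) + 1) * r < CS.nor c)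
    (X : Finset V) (hXsub : X ⊆ CS.val c) (hXcard : X.card < EXP B n δ) :
    ∃ d, CS.succ c d ∧ CS.nor c - ((δ : ℝ) + 1) * r ≤ CS.nor d ∧
      ∀ x ∈ CS.val d, x ∉ X := by
  classical
  have hδr : 0 ≤ (δ : ℝ) * r := by positivity
  have hc' : 1 + (δ : ℝ) * r < CS.nor c := by nlinarith
  obtain ⟨d₀, hd₀s, hd₀n, hd₀her⟩ := herbig_exists CS n B r hr hB hdec hbig δ c hc'
  have hd₀nor : 1 < CS.nor d₀ := by nlinarith
  have hd₀big : CS.Big (EXP B n δ) r d₀ := hd₀her d₀ (CS.succ_refl d₀) hd₀nor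
  have hEpos : 0 < EXP B n δ := EXP_pos hB δ
  set F : V → Fin (EXP B n δ) := fun x =>
    if hx : x ∈ X then ⟨(X.equivFin ⟨x, hx⟩ : ℕ) + 1, by
      have := (X.equivFin ⟨x, hx⟩).isLt; omega⟩ else ⟨0, hEpos⟩ with hF
  obtain ⟨d, hds, hdn, hdmono⟩ := hd₀big F
  have hnord : CS.nor c - ((δ : ℝ) + 1) * r ≤ CS.nor d := by push_cast; push_cast at hdn; linarith
  refine ⟨d, CS.succ_trans c d₀ d hd₀s hds, hnord, ?_⟩
  intro x hx hxX
  have hd1 : 1 < CS.nor d := by nlinarith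
  have hall : ∀ y ∈ CS.val d, y = x := by
    intro y hy
    have hFeq := hdmono y hy x hx
    simp only [hF, dif_pos hxX] at hFeq
    by_cases hyX : y ∈ X
    · simp only [dif_pos hyX, Fin.mk.injEq] at hFeq
      have : X.equivFin ⟨y, hyX⟩ = X.equivFin ⟨x, hxX⟩ := by
        apply Fin.ext; omega
      have := X.equivFin.injective this
      exact Subtype.ext_iff.mp this
    · simp only [dif_neg hyX, Fin.mk.injEq] at hFeq
      omega
  have hsub : CS.val d ⊆ {x} := fun y hy => Finset.mem_singleton.mpr (hall y hy)
  have hcard1 : (CS.val d).card = 1 := by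
    have h1 : (CS.val d).card ≤ 1 := le_trans (Finset.card_le_card hsub) (by simp)
    have h2 : 1 ≤ (CS.val d).card := Finset.card_pos.mpr (CS.val_nonempty d)
    omega
  have := CS.nor_of_singleton d hcard1
  linarith
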